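/- arXiv:2110.14734 — 5 statements merged into one kernel-verified Lean document; each statement's English description precedes it below -/
import Mathlib

section
/- Let A and B be persistence diagrams with |Ã| and |B̃| off-diagonal points respectively, let L be a lower bound with 0 < L ≤ W₁(A,B), let ε > 0, and set δ := 2εL / (√2·(|Ã| + |B̃|)). If A^δ and B^δ are obtained by moving each off-diagonal point of A and B by Euclidean distance at most (√2/2)·δ, then (1 − ε)·W₁(A,B) ≤ W₁(A^δ, B^δ) ≤ (1 + ε)·W₁(A,B). -/
noncomputable section

abbrev E2 := EuclideanSpace ℝ (Fin 2)

/-- Euclidean distance of a point to the diagonal `Δ = {(t,t)}`. -/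
def diagDist (p : E2) : ℝ := Metric.infDist p {q : E2 | q 0 = q 1}

/-- A partial matching between the index sets of the two diagrams: each index
appears in at most one matched pair. -/
def IsPartialMatching {n₁ n₂ : ℕ} (M : Finset (Fin n₁ × Fin n₂)) : Prop :=
  (∀ x ∈ M, ∀ y ∈ M, x.1 = y.1 → x = y) ∧ (∀ x ∈ M, ∀ y ∈ M, x.2 = y.2 → x = y)

/-- Cost of a partial matching: matched pairs pay their Euclidean distance and
unmatched off-diagonal points pay their distance to the diagonal. -/
def matchCost {n₁ n₂ : ℕ} (a : Fin n₁ → E2) (b : Fin n₂ → E2)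
    (M : Finset (Fin n₁ × Fin n₂)) : ℝ :=
  ∑ x ∈ M, dist (a x.1) (b x.2)
    + ∑ i ∈ Finset.univ.filter (fun i : Fin n₁ => ∀ x ∈ M, x.1 ≠ i), diagDist (a i)
    + ∑ j ∈ Finset.univ.filter (fun j : Fin n₂ => ∀ x ∈ M, x.2 ≠ j), diagDist (b j)

/-- The 1-Wasserstein distance between persistence diagrams given by their
off-diagonal points. -/
noncomputable def W1 {n₁ n₂ : ℕ} (a : Fin n₁ → E2) (b : Fin n₂ → E2) : ℝ :=
  sInf {c | ∃ M, IsPartialMatching M ∧ c = matchCost a b M}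

lemma matchCost_nonneg {n₁ n₂ : ℕ} (a : Fin n₁ → E2) (b : Fin n₂ → E2)
    (M : Finset (Fin n₁ × Fin n₂)) : 0 ≤ matchCost a b M := by
  unfold matchCost
  have h1 : (0:ℝ) ≤ ∑ x ∈ M, dist (a x.1) (b x.2) :=
    Finset.sum_nonneg fun x _ => dist_nonneg
  have h2 : (0:ℝ) ≤ ∑ i ∈ Finset.univ.filter (fun i : Fin n₁ => ∀ x ∈ M, x.1 ≠ i), diagDist (a i) :=
    Finset.sum_nonneg fun i _ => Metric.infDist_nonneg
  have h3 : (0:ℝ) ≤ ∑ j ∈ Finset.univ.filter (fun j : Fin n₂ => ∀ x ∈ M, x.2 ≠ j), diagDist (b j) :=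
    Finset.sum_nonneg fun j _ => Metric.infDist_nonneg
  linarith

lemma card_fst {n₁ n₂ : ℕ} (M : Finset (Fin n₁ × Fin n₂)) (hM : IsPartialMatching M) :
    M.card + (Finset.univ.filter (fun i : Fin n₁ => ∀ x ∈ M, x.1 ≠ i)).card ≤ n₁ := by
  have hinj : Set.InjOn Prod.fst (M : Set (Fin n₁ × Fin n₂)) := by
    intro x hx y hy hxy
    exact hM.1 x hx y hy hxy
  have hcard : (M.image Prod.fst).card = M.card := Finset.card_image_of_injOn hinj
  have hdisj : Disjoint (M.image Prod.fst)
      (Finset.univ.filter (fun i : Fin n₁ => ∀ x ∈ M, x.1 ≠ i)) := by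
    rw [Finset.disjoint_left]
    intro i hi hi'
    obtain ⟨x, hx, hxi⟩ := Finset.mem_image.mp hi
    exact (Finset.mem_filter.mp hi').2 x hx hxi
  calc M.card + _ = ((M.image Prod.fst) ∪ _).card := by
        rw [Finset.card_union_of_disjoint hdisj, hcard]
    _ ≤ (Finset.univ : Finset (Fin n₁)).card := Finset.card_le_card (Finset.subset_univ _)
    _ = n₁ := by simp

lemma card_snd {n₁ n₂ : ℕ} (M : Finset (Fin n₁ × Fin n₂)) (hM : IsPartialMatching M) :
    M.card + (Finset.univ.filter (fun j : Fin n₂ => ∀ x ∈ M, x.2 ≠ j)).card ≤ n₂ := by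
  have hinj : Set.InjOn Prod.snd (M : Set (Fin n₁ × Fin n₂)) := by
    intro x hx y hy hxy
    exact hM.2 x hx y hy hxy
  have hcard : (M.image Prod.snd).card = M.card := Finset.card_image_of_injOn hinj
  have hdisj : Disjoint (M.image Prod.snd)
      (Finset.univ.filter (fun j : Fin n₂ => ∀ x ∈ M, x.2 ≠ j)) := by
    rw [Finset.disjoint_left]
    intro j hj hj'
    obtain ⟨x, hx, hxj⟩ := Finset.mem_image.mp hj
    exact (Finset.mem_filter.mp hj').2 x hx hxj
  calc M.card + _ = ((M.image Prod.snd) ∪ _).card := by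
        rw [Finset.card_union_of_disjoint hdisj, hcard]
    _ ≤ (Finset.univ : Finset (Fin n₂)).card := Finset.card_le_card (Finset.subset_univ _)
    _ = n₂ := by simp

lemma cost_shift {n₁ n₂ : ℕ} (a a' : Fin n₁ → E2) (b b' : Fin n₂ → E2)
    (η : ℝ) (hη : 0 ≤ η)
    (hma : ∀ i, dist (a i) (a' i) ≤ η) (hmb : ∀ j, dist (b j) (b' j) ≤ η)
    (M : Finset (Fin n₁ × Fin n₂)) (hM : IsPartialMatching M) :
    matchCost a' b' M ≤ matchCost a b M + η * ((n₁ : ℝ) + n₂) := by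
  set FA := Finset.univ.filter (fun i : Fin n₁ => ∀ x ∈ M, x.1 ≠ i) with hFA
  set FB := Finset.univ.filter (fun j : Fin n₂ => ∀ x ∈ M, x.2 ≠ j) with hFB
  have s1 : ∑ x ∈ M, dist (a' x.1) (b' x.2)
      ≤ ∑ x ∈ M, dist (a x.1) (b x.2) + M.card * (2 * η) := by
    have : ∑ x ∈ M, dist (a' x.1) (b' x.2)
        ≤ ∑ x ∈ M, (dist (a x.1) (b x.2) + 2 * η) := by
      apply Finset.sum_le_sum
      intro x _
      have t1 : dist (a' x.1) (b' x.2) ≤ dist (a' x.1) (a x.1) + dist (a x.1) (b x.2)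
          + dist (b x.2) (b' x.2) := dist_triangle4 _ _ _ _
      have t2 : dist (a' x.1) (a x.1) ≤ η := by rw [dist_comm]; exact hma x.1
      have t3 : dist (b x.2) (b' x.2) ≤ η := hmb x.2
      linarith
    simpa [Finset.sum_add_distrib, mul_comm] using this
  have s2 : ∑ i ∈ FA, diagDist (a' i) ≤ ∑ i ∈ FA, diagDist (a i) + FA.card * η := by
    have : ∑ i ∈ FA, diagDist (a' i) ≤ ∑ i ∈ FA, (diagDist (a i) + η) := by
      apply Finset.sum_le_sum
      intro i _
      have := Metric.infDist_le_infDist_add_dist (x := a' i) (y := a i)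
        (s := {q : E2 | q 0 = q 1})
      have hd : dist (a' i) (a i) ≤ η := by rw [dist_comm]; exact hma i
      unfold diagDist
      linarith
    simpa [Finset.sum_add_distrib, mul_comm] using this
  have s3 : ∑ j ∈ FB, diagDist (b' j) ≤ ∑ j ∈ FB, diagDist (b j) + FB.card * η := by
    have : ∑ j ∈ FB, diagDist (b' j) ≤ ∑ j ∈ FB, (diagDist (b j) + η) := by
      apply Finset.sum_le_sum
      intro j _
      have := Metric.infDist_le_infDist_add_dist (x := b' j) (y := b j)
        (s := {q : E2 | q 0 = q 1})
      have hd : dist (b' j) (b j) ≤ η := by rw [dist_comm]; exact hmb j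
      unfold diagDist
      linarith
    simpa [Finset.sum_add_distrib, mul_comm] using this
  have c1 : (M.card : ℝ) + FA.card ≤ n₁ := by
    exact_mod_cast card_fst M hM
  have c2 : (M.card : ℝ) + FB.card ≤ n₂ := by
    exact_mod_cast card_snd M hM
  have key : (M.card : ℝ) * (2 * η) + FA.card * η + FB.card * η ≤ η * ((n₁:ℝ) + n₂) := by
    nlinarith [hη]
  unfold matchCost
  rw [← hFA, ← hFB]
  linarith

lemma W1_shift {n₁ n₂ : ℕ} (a a' : Fin n₁ → E2) (b b' : Fin n₂ → E2)
    (η : ℝ) (hη : 0 ≤ η)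
    (hma : ∀ i, dist (a i) (a' i) ≤ η) (hmb : ∀ j, dist (b j) (b' j) ≤ η) :
    W1 a' b' ≤ W1 a b + η * ((n₁ : ℝ) + n₂) := by
  set S := {c | ∃ M, IsPartialMatching M ∧ c = matchCost a b M} with hS
  set S' := {c | ∃ M, IsPartialMatching M ∧ c = matchCost a' b' M} with hS'
  have hSne : S.Nonempty := ⟨matchCost a b ∅, ∅, ⟨by simp, by simp⟩, rfl⟩
  have hbdd' : BddBelow S' := ⟨0, fun c ⟨M, _, hc⟩ => hc ▸ matchCost_nonneg a' b' M⟩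
  have : W1 a' b' - η * ((n₁:ℝ) + n₂) ≤ sInf S := by
    apply le_csInf hSne
    intro c hc
    obtain ⟨M, hM, rfl⟩ := hc
    have h1 : W1 a' b' ≤ matchCost a' b' M := csInf_le hbdd' ⟨M, hM, rfl⟩
    have h2 := cost_shift a a' b b' η hη hma hmb M hM
    linarith
  have : W1 a' b' - η * ((n₁:ℝ) + n₂) ≤ W1 a b := this
  linarith

/-- δ-condensation: if `0 < L ≤ W₁(A,B)`, `δ = 2εL/(√2(|Ã|+|B̃|))`, and each
off-diagonal point of `A`, `B` is moved by at most `(√2/2)·δ`, then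
`(1-ε)·W₁(A,B) ≤ W₁(A^δ,B^δ) ≤ (1+ε)·W₁(A,B)`. -/
theorem delta_condensation {n₁ n₂ : ℕ} (hn : 0 < n₁ + n₂)
    (a a' : Fin n₁ → E2) (b b' : Fin n₂ → E2)
    (ha : ∀ i, (a i) 0 < (a i) 1) (hb : ∀ j, (b j) 0 < (b j) 1)
    (ε L δ : ℝ) (hε : 0 < ε) (hL0 : 0 < L) (hLW : L ≤ W1 a b)
    (hδ : δ = 2 * ε * L / (Real.sqrt 2 * ((n₁ : ℝ) + n₂)))
    (hmova : ∀ i, dist (a i) (a' i) ≤ Real.sqrt 2 / 2 * δ)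
    (hmovb : ∀ j, dist (b j) (b' j) ≤ Real.sqrt 2 / 2 * δ) :
    (1 - ε) * W1 a b ≤ W1 a' b' ∧ W1 a' b' ≤ (1 + ε) * W1 a b := by
  have hs2 : (0:ℝ) < Real.sqrt 2 := Real.sqrt_pos.mpr (by norm_num)
  have hN : (0:ℝ) < (n₁:ℝ) + n₂ := by exact_mod_cast hn
  have hδ0 : 0 ≤ δ := by
    rw [hδ]; positivity
  set η := Real.sqrt 2 / 2 * δ with hηd
  have hη0 : 0 ≤ η := by positivity
  have hsq : Real.sqrt 2 * Real.sqrt 2 = 2 := Real.mul_self_sqrt (by norm_num)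
  have hkey : η * ((n₁:ℝ) + n₂) = ε * L := by
    rw [hηd, hδ]
    field_simp
  have hfwd : W1 a' b' ≤ W1 a b + ε * L := by
    have := W1_shift a a' b b' η hη0 hmova hmovb
    linarith [this, hkey.le, hkey.ge]
  have hmova' : ∀ i, dist (a' i) (a i) ≤ η := fun i => by
    rw [dist_comm]; exact hmova i
  have hmovb' : ∀ j, dist (b' j) (b j) ≤ η := fun j => by
    rw [dist_comm]; exact hmovb j
  have hbwd : W1 a b ≤ W1 a' b' + ε * L := by
    have := W1_shift a' a b' b η hη0 hmova' hmovb'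
    linarith
  have hεL : ε * L ≤ ε * W1 a b := by nlinarith
  constructor
  · nlinarith
  · nlinarith
end
end

section
/- Let P be a finite point set in ℝ² and let an s-WSPD of P be given with s > 4. The graph WS_s(P) on P, with an edge between the representatives of every well-separated pair weighted by their Euclidean distance, is a geometric t-spanner of P for t = (s+4)/(s−4): for all p ≠ q in P, the shortest-path distance in WS_s(P) between p and q is at most ((s+4)/(s−4))·‖p − q‖₂. -/
/-! Strong induction on `dist p q` over the finitely many pairs of points of `P`. The pair of
the WSPD separating `p` and `q`, with radius `d`, gives an edge `u v` with `p, u` in one ball and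
`v, q` in the other. Then `|pu|, |vq| ≤ 2d < |pq|`, so by induction both are bridged by walks of
cost at most `t · 2d`, while `|uv| ≤ |pq| + 4d`. For `t = (s + 4)/(s - 4)` the resulting bound
`4d (t + 1) + |pq| ≤ t |pq|` is exactly the separation `s d ≤ |pq|`. -/

noncomputable section

/-- `U` and `V` are `s`-well separated: each lies in a ball of radius `d` and the two
balls are at distance at least `s·d`. -/
def WellSeparated (s : ℝ) (U V : Set E2) : Prop :=
  ∃ (x y : E2) (d : ℝ), 0 ≤ d ∧ (∀ u ∈ U, dist u x ≤ d) ∧ (∀ v ∈ V, dist v y ≤ d) ∧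
    s * d + 2 * d ≤ dist x y

/-- Total weight of a path given as a list of consecutive vertices. -/
def pathCost (w : E2 → E2 → ℝ) : List E2 → ℝ
  | [] => 0
  | [_] => 0
  | p :: q :: t => w p q + pathCost w (q :: t)

/-- `l` is a walk from `p` to `q` along edges of the adjacency relation `Adj`. -/
def IsWalk (Adj : E2 → E2 → Prop) (p q : E2) (l : List E2) : Prop :=
  l.head? = some p ∧ l.getLast? = some q ∧ l.Chain' Adj

lemma pathCost_append {w : E2 → E2 → ℝ} {l₁ l₂ : List E2} {u v : E2}
    (h₁ : l₁.getLast? = some u) (h₂ : l₂.head? = some v) :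
    pathCost w (l₁ ++ l₂) = pathCost w l₁ + w u v + pathCost w l₂ := by
  obtain ⟨l₂, rfl⟩ : ∃ l, l₂ = v :: l := by
    cases l₂ with
    | nil => simp at h₂
    | cons a l => exact ⟨l, by simpa using h₂⟩
  induction l₁ with
  | nil => simp at h₁
  | cons a l ih =>
    cases l with
    | nil =>
      obtain rfl : a = u := by simpa using h₁
      simp [pathCost]
    | cons b l =>
      rw [List.getLast?_cons_cons] at h₁
      simp only [List.cons_append, pathCost] at ih ⊢
      rw [ih h₁]
      ring

lemma IsWalk.singleton (Adj : E2 → E2 → Prop) (p : E2) : IsWalk Adj p p [p] :=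
  ⟨rfl, rfl, List.isChain_singleton p⟩

lemma IsWalk.append {Adj : E2 → E2 → Prop} {p u v q : E2} {l₁ l₂ : List E2}
    (h₁ : IsWalk Adj p u l₁) (huv : Adj u v) (h₂ : IsWalk Adj v q l₂) :
    IsWalk Adj p q (l₁ ++ l₂) := by
  obtain ⟨h₁head, h₁last, h₁chain⟩ := h₁
  obtain ⟨h₂head, h₂last, h₂chain⟩ := h₂
  refine ⟨?_, ?_, List.isChain_append.mpr ⟨h₁chain, h₂chain, ?_⟩⟩
  · rw [List.head?_append, h₁head]; rfl
  · rw [List.getLast?_append, h₂last]; rfl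
  · simp only [h₁last, h₂head, Option.mem_def, Option.some.injEq]
    rintro _ rfl _ rfl
    exact huv

theorem exists_walk_pathCost_le_of_forall_bridge {P : Finset E2} {Adj : E2 → E2 → Prop} {t : ℝ}
    (hstep : ∀ p ∈ P, ∀ q ∈ P, p ≠ q → ∃ u ∈ P, ∃ v ∈ P, Adj u v ∧
      dist p u < dist p q ∧ dist v q < dist p q ∧
      t * dist p u + dist u v + t * dist v q ≤ t * dist p q) :
    ∀ p ∈ P, ∀ q ∈ P, ∃ l, IsWalk Adj p q l ∧ pathCost dist l ≤ t * dist p q := by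
  have hwf : (P ×ˢ P : Set (E2 × E2)).WellFoundedOn
      (Function.onFun (· < ·) fun x : E2 × E2 => dist x.1 x.2) :=
    Set.wellFoundedOn_image.mp ((P ×ˢ P : Set (E2 × E2)).toFinite.image _).wellFoundedOn
  intro p hp q hq
  refine hwf.induction (Set.mk_mem_prod hp hq)
    (P := fun x => ∃ l, IsWalk Adj x.1 x.2 l ∧ pathCost dist l ≤ t * dist x.1 x.2) ?_
  rintro ⟨p, q⟩ ⟨hp, hq⟩ ih
  by_cases hpq : p = q
  · subst hpq
    exact ⟨[p], IsWalk.singleton Adj p, by simp [pathCost]⟩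
  obtain ⟨u, hu, v, hv, huv, hpu, hvq, hcost⟩ := hstep p hp q hq hpq
  obtain ⟨l₁, hl₁, hl₁cost⟩ := ih (p, u) ⟨hp, hu⟩ hpu
  obtain ⟨l₂, hl₂, hl₂cost⟩ := ih (v, q) ⟨hv, hq⟩ hvq
  refine ⟨l₁ ++ l₂, hl₁.append huv hl₂, ?_⟩
  rw [pathCost_append hl₁.2.1 hl₂.1]
  linarith

lemma WellSeparated.symm {s : ℝ} {U V : Set E2} (h : WellSeparated s U V) :
    WellSeparated s V U := by
  obtain ⟨x, y, d, hd, hU, hV, hsep⟩ := h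
  exact ⟨y, x, d, hd, hV, hU, by rwa [dist_comm]⟩

lemma WellSeparated.exists_radius {s : ℝ} {U V : Set E2} (h : WellSeparated s U V)
    {p u q v : E2} (hp : p ∈ U) (hu : u ∈ U) (hq : q ∈ V) (hv : v ∈ V) :
    ∃ d, dist p u ≤ 2 * d ∧ dist v q ≤ 2 * d ∧ s * d ≤ dist p q ∧
      dist u v ≤ dist p q + 4 * d := by
  obtain ⟨x, y, d, -, hU, hV, hsep⟩ := h
  have hpx := hU p hp
  have hux := hU u hu
  have hqy := hV q hq
  have hvy := hV v hv
  refine ⟨d, ?_, ?_, ?_, ?_⟩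
  · linarith [dist_triangle_right p u x]
  · linarith [dist_triangle_right v q y]
  · linarith [dist_triangle4 x p q y, dist_comm x p]
  · linarith [dist_triangle4 u x y v, dist_triangle4 x p q y, dist_comm x p, dist_comm y v]

lemma spanner_ratio_mul_add_le {s d D a b c : ℝ} (hs : 4 < s)
    (ha : a ≤ 2 * d) (hc : c ≤ 2 * d) (hsd : s * d ≤ D) (hb : b ≤ D + 4 * d) :
    (s + 4) / (s - 4) * a + b + (s + 4) / (s - 4) * c ≤ (s + 4) / (s - 4) * D := by
  set t := (s + 4) / (s - 4)
  have hs4 : 0 < s - 4 := by linarith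
  have ht : t * (s - 4) = s + 4 := div_mul_cancel₀ _ hs4.ne'
  have ht0 : 0 ≤ t := by positivity
  clear_value t
  -- multiplied by `s - 4`, this is `8 s d ≤ 8 D`
  have hkey : 4 * d * (t + 1) ≤ (t - 1) * D := by
    refine le_of_mul_le_mul_right ?_ hs4
    linear_combination 8 * hsd + (4 * d - D) * ht
  nlinarith [mul_le_mul_of_nonneg_left ha ht0, mul_le_mul_of_nonneg_left hc ht0]

theorem WellSeparated.bridge_bound {s : ℝ} (hs : 4 < s) {U V : Set E2}
    (h : WellSeparated s U V) {p u q v : E2} (hp : p ∈ U) (hu : u ∈ U) (hq : q ∈ V)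
    (hv : v ∈ V) (hpq : p ≠ q) :
    dist p u < dist p q ∧ dist v q < dist p q ∧
      (s + 4) / (s - 4) * dist p u + dist u v + (s + 4) / (s - 4) * dist v q ≤
        (s + 4) / (s - 4) * dist p q := by
  obtain ⟨d, hpu, hvq, hsd, huv⟩ := h.exists_radius hp hu hq hv
  have hpq_pos : 0 < dist p q := dist_pos.mpr hpq
  have h2d : 2 * d < dist p q := by nlinarith
  exact ⟨hpu.trans_lt h2d, hvq.trans_lt h2d, spanner_ratio_mul_add_le hs hpu hvq hsd huv⟩

/-- The graph `WS_s(P)` with an edge between the representatives of each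
well-separated pair of an `s`-WSPD of `P` is a geometric `(s+4)/(s-4)`-spanner:
between any two distinct points of `P` there is a path of Euclidean length at most
`((s+4)/(s-4))·‖p - q‖₂`. -/
theorem wspd_spanner {ι : Type*} (P : Finset E2) (s : ℝ) (hs : 4 < s)
    (U V : ι → Set E2) (uRep vRep : ι → E2)
    (hUP : ∀ i, U i ⊆ (P : Set E2)) (hVP : ∀ i, V i ⊆ (P : Set E2))
    (hWS : ∀ i, WellSeparated s (U i) (V i))
    (huRep : ∀ i, uRep i ∈ U i) (hvRep : ∀ i, vRep i ∈ V i)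
    (hcover : ∀ p ∈ P, ∀ q ∈ P, p ≠ q →
      ∃! i, (p ∈ U i ∧ q ∈ V i) ∨ (p ∈ V i ∧ q ∈ U i)) :
    ∀ p ∈ P, ∀ q ∈ P, p ≠ q →
      ∃ l : List E2,
        IsWalk (fun x y => ∃ i, (x = uRep i ∧ y = vRep i) ∨ (x = vRep i ∧ y = uRep i))
          p q l ∧
        pathCost dist l ≤ (s + 4) / (s - 4) * dist p q := by
  refine fun p hp q hq _ => exists_walk_pathCost_le_of_forall_bridge ?_ p hp q hq
  intro p hp q hq hpq
  obtain ⟨i, hi, -⟩ := hcover p hp q hq hpq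
  rcases hi with ⟨hpU, hqV⟩ | ⟨hpV, hqU⟩
  · exact ⟨uRep i, hUP i (huRep i), vRep i, hVP i (hvRep i), ⟨i, .inl ⟨rfl, rfl⟩⟩,
      (hWS i).bridge_bound hs hpU (huRep i) hqV (hvRep i) hpq⟩
  · exact ⟨vRep i, hVP i (hvRep i), uRep i, hUP i (huRep i), ⟨i, .inr ⟨rfl, rfl⟩⟩,
      (hWS i).symm.bridge_bound hs hpV (hvRep i) hqU (huRep i) hpq⟩
end
end

section
/- Combining node sparsification with relative error factor (1 ± 8/(s−4)) (valid for s ≥ 12) and arc sparsification with factor (1 + 4/s + 4/(s−2)), the overall algorithm output f̄* satisfies W₁(A,B)·(1 − 8/(s−4))·1 ≤ f̄* ≤ (1 + 4/s + 4/(s−2))·(1 + 8/(s−4))·W₁(A,B) ≤ (1+ε)²·W₁(A,B) where ε = 8/(s−4) and s ≥ 12. -/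
/-- Combining node sparsification (relative error factor `1 ± 8/(s-4)`, valid for
`s ≥ 12`) with arc sparsification (factor `1 + 4/s + 4/(s-2)`), the output `f̄*`
satisfies `(1 - 8/(s-4))·W₁ ≤ f̄*`,
`f̄* ≤ (1 + 4/s + 4/(s-2))·(1 + 8/(s-4))·W₁ ≤ (1+ε)²·W₁` with `ε = 8/(s-4)`.
Here `w = W₁(A,B)`, `wδ = W₁(A^δ,B^δ)` and `fbar = f̄*`. -/
theorem combined_approximation (s ε w wδ fbar : ℝ) (hs : 12 ≤ s)
    (hε : ε = 8 / (s - 4)) (hw : 0 ≤ w)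
    (hcond₁ : (1 - 8 / (s - 4)) * w ≤ wδ) (hcond₂ : wδ ≤ (1 + 8 / (s - 4)) * w)
    (hspan₁ : wδ ≤ fbar) (hspan₂ : fbar ≤ (1 + 4 / s + 4 / (s - 2)) * wδ) :
    (1 - 8 / (s - 4)) * w ≤ fbar ∧
    fbar ≤ (1 + 4 / s + 4 / (s - 2)) * (1 + 8 / (s - 4)) * w ∧
    (1 + 4 / s + 4 / (s - 2)) * (1 + 8 / (s - 4)) * w ≤ (1 + ε) ^ 2 * w := by
  have hs0 : (0:ℝ) < s := by linarith
  have hs2 : (0:ℝ) < s - 2 := by linarith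
  have hs4 : (0:ℝ) < s - 4 := by linarith
  have hA : (0:ℝ) < 1 + 4 / s + 4 / (s - 2) := by positivity
  have key : 1 + 4 / s + 4 / (s - 2) ≤ 1 + 8 / (s - 4) := by
    have h : 4 / s + 4 / (s - 2) ≤ 8 / (s - 4) := by
      rw [div_add_div _ _ (ne_of_gt hs0) (ne_of_gt hs2),
        div_le_div_iff₀ (by positivity) hs4]
      nlinarith
    linarith
  refine ⟨le_trans hcond₁ hspan₁, ?_, ?_⟩
  · calc fbar ≤ (1 + 4 / s + 4 / (s - 2)) * wδ := hspan₂
      _ ≤ (1 + 4 / s + 4 / (s - 2)) * ((1 + 8 / (s - 4)) * w) :=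
        mul_le_mul_of_nonneg_left hcond₂ hA.le
      _ = (1 + 4 / s + 4 / (s - 2)) * (1 + 8 / (s - 4)) * w := by ring
  · have h1 : (0:ℝ) ≤ 1 + 8 / (s - 4) := by positivity
    have := mul_le_mul_of_nonneg_right key h1
    subst hε
    have := mul_le_mul_of_nonneg_right this hw
    calc (1 + 4 / s + 4 / (s - 2)) * (1 + 8 / (s - 4)) * w
        ≤ (1 + 8 / (s - 4)) * (1 + 8 / (s - 4)) * w := this
      _ = (1 + 8 / (s - 4)) ^ 2 * w := by ring
end

section
/- For persistence diagrams A and B, the minimum cost of a perfect matching on the bipartite graph Bi(A,B) (where edges between diagonal projections cost 0) equals W₁(A,B), the infimum over partial matchings M ⊆ Ã × B̃ of ∑_{(x,y)∈M}‖x−y‖₂ + ∑_{x ∉ π₁(M)} d_Δ(x) + ∑_{y ∉ π₂(M)} d_Δ(y). -/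
noncomputable section

/-- Perfect matchings of `Bi(A,B)`: bijections between `U₁ = Ã ∪ B̃_proj` and
`U₂ = B̃ ∪ Ã_proj` such that an off-diagonal point is matched to a projection only
to its own projection. -/
def IsPerfectMatching {n₁ n₂ : ℕ} (μ : (Fin n₁ ⊕ Fin n₂) ≃ (Fin n₂ ⊕ Fin n₁)) : Prop :=
  (∀ i j, μ (Sum.inl i) = Sum.inr j → j = i) ∧
  (∀ j i, μ (Sum.inr j) = Sum.inl i → i = j)

/-- Edge weights of `Bi(A,B)`: `‖p-q‖₂` between off-diagonal points, `d_Δ` between a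
point and its diagonal projection, and `0` between diagonal projections. -/
def edgeW {n₁ n₂ : ℕ} (a : Fin n₁ → E2) (b : Fin n₂ → E2) :
    (Fin n₁ ⊕ Fin n₂) → (Fin n₂ ⊕ Fin n₁) → ℝ
  | Sum.inl i, Sum.inl j => dist (a i) (b j)
  | Sum.inl i, Sum.inr _ => diagDist (a i)
  | Sum.inr _, Sum.inl j => diagDist (b j)
  | Sum.inr _, Sum.inr _ => 0

open Finset in
/-- The partial matching induced by a perfect matching. -/
def matchOf {n₁ n₂ : ℕ} (μ : (Fin n₁ ⊕ Fin n₂) ≃ (Fin n₂ ⊕ Fin n₁)) :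
    Finset (Fin n₁ × Fin n₂) :=
  Finset.univ.filter (fun x => μ (Sum.inl x.1) = Sum.inl x.2)

lemma mem_matchOf {n₁ n₂ : ℕ} {μ : (Fin n₁ ⊕ Fin n₂) ≃ (Fin n₂ ⊕ Fin n₁)}
    {x : Fin n₁ × Fin n₂} : x ∈ matchOf μ ↔ μ (Sum.inl x.1) = Sum.inl x.2 := by
  simp [matchOf]

lemma matchOf_isPartial {n₁ n₂ : ℕ} (μ : (Fin n₁ ⊕ Fin n₂) ≃ (Fin n₂ ⊕ Fin n₁)) :
    IsPartialMatching (matchOf μ) := by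
  constructor
  · rintro ⟨i, j⟩ hx ⟨i', j'⟩ hy h
    simp only at h; subst h
    rw [mem_matchOf] at hx hy
    have : (Sum.inl j : Fin n₂ ⊕ Fin n₁) = Sum.inl j' := hx.symm.trans hy
    simp_all
  · rintro ⟨i, j⟩ hx ⟨i', j'⟩ hy h
    simp only at h; subst h
    rw [mem_matchOf] at hx hy
    have : (Sum.inl i : Fin n₁ ⊕ Fin n₂) = Sum.inl i' := μ.injective (hx.trans hy.symm)
    simp_all

lemma perfect_cost {n₁ n₂ : ℕ} (a : Fin n₁ → E2) (b : Fin n₂ → E2)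
    (μ : (Fin n₁ ⊕ Fin n₂) ≃ (Fin n₂ ⊕ Fin n₁)) (hμ : IsPerfectMatching μ) :
    ∑ x, edgeW a b x (μ x) = matchCost a b (matchOf μ) := by
  classical
  rw [Fintype.sum_sum_type, matchCost]
  have h1 : ∑ i : Fin n₁, edgeW a b (Sum.inl i) (μ (Sum.inl i))
      = ∑ x ∈ matchOf μ, dist (a x.1) (b x.2)
        + ∑ i ∈ Finset.univ.filter (fun i : Fin n₁ => ∀ x ∈ matchOf μ, x.1 ≠ i),
            diagDist (a i) := by
    rw [← Finset.sum_filter_add_sum_filter_not Finset.univ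
      (fun i : Fin n₁ => ∃ j, μ (Sum.inl i) = Sum.inl j)]
    congr 1
    · refine (Finset.sum_bij (fun x _ => x.1) ?_ ?_ ?_ ?_).symm
      · rintro ⟨i, j⟩ hx
        rw [mem_matchOf] at hx
        simp only [Finset.mem_filter, Finset.mem_univ, true_and]
        exact ⟨j, hx⟩
      · intro x hx y hy h
        exact (matchOf_isPartial μ).1 x hx y hy h
      · intro i hi
        simp only [Finset.mem_filter, Finset.mem_univ, true_and] at hi
        obtain ⟨j, hj⟩ := hi
        exact ⟨(i, j), mem_matchOf.mpr hj, rfl⟩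
      · rintro ⟨i, j⟩ hx
        rw [mem_matchOf] at hx
        show dist (a i) (b j) = edgeW a b (Sum.inl i) (μ (Sum.inl i))
        rw [hx]
        rfl
    · refine Finset.sum_congr ?_ ?_
      · apply Finset.filter_congr
        intro i _
        constructor
        · intro h x hx hx1
          exact h ⟨x.2, by rw [← hx1]; exact mem_matchOf.mp hx⟩
        · rintro h ⟨j, hj⟩
          exact h (i, j) (mem_matchOf.mpr hj) rfl
      · intro i hi
        simp only [Finset.mem_filter, Finset.mem_univ, true_and] at hi
        rcases hcase : μ (Sum.inl i) with j | k
        · exact absurd rfl (hi (i, j) (mem_matchOf.mpr hcase))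
        · rfl
  have h2 : ∑ j : Fin n₂, edgeW a b (Sum.inr j) (μ (Sum.inr j))
      = ∑ j ∈ Finset.univ.filter (fun j : Fin n₂ => ∀ x ∈ matchOf μ, x.2 ≠ j),
          diagDist (b j) := by
    rw [← Finset.sum_filter_add_sum_filter_not Finset.univ
      (fun j : Fin n₂ => ∀ x ∈ matchOf μ, x.2 ≠ j)]
    have hz : ∑ j ∈ Finset.univ.filter
        (fun j : Fin n₂ => ¬ ∀ x ∈ matchOf μ, x.2 ≠ j),
        edgeW a b (Sum.inr j) (μ (Sum.inr j)) = 0 := by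
      apply Finset.sum_eq_zero
      intro j hj
      simp only [Finset.mem_filter, Finset.mem_univ, true_and] at hj
      push_neg at hj
      obtain ⟨x, hx, hx2⟩ := hj
      rw [mem_matchOf] at hx
      rcases hcase : μ (Sum.inr j) with i | k
      · -- then i = j by perfectness, but inl j hit twice : contradiction
        have hij : i = j := hμ.2 j i hcase
        subst hij
        have : (Sum.inl x.1 : Fin n₁ ⊕ Fin n₂) = Sum.inr i :=
          μ.injective (by rw [hx, hcase, hx2])
        simp at this
      · rfl
    rw [hz, add_zero]
    apply Finset.sum_congr rfl
    intro j hj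
    simp only [Finset.mem_filter, Finset.mem_univ, true_and] at hj
    rcases hcase : μ (Sum.inr j) with i | k
    · have hij : i = j := hμ.2 j i hcase
      subst hij
      rfl
    · -- μ (inr j) = inr k; then μ⁻¹ (inl j) must be inl i giving a match with x.2 = j
      exfalso
      rcases hcase2 : μ.symm (Sum.inl j) with i | j'
      · have : μ (Sum.inl i) = Sum.inl j := by
          rw [← hcase2, Equiv.apply_symm_apply]
        exact hj (i, j) (mem_matchOf.mpr this) rfl
      · have hmj : μ (Sum.inr j') = Sum.inl j := by
          rw [← hcase2, Equiv.apply_symm_apply]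
        have : j = j' := hμ.2 j' j hmj
        subst this
        rw [hmj] at hcase
        simp at hcase
  rw [h1, h2]

/-- The perfect matching induced by a partial matching. -/
def matchEquiv {n₁ n₂ : ℕ} (M : Finset (Fin n₁ × Fin n₂)) (hM : IsPartialMatching M) :
    (Fin n₁ ⊕ Fin n₂) ≃ (Fin n₂ ⊕ Fin n₁) where
  toFun x := match x with
    | Sum.inl i => if h : ∃ j, (i, j) ∈ M then Sum.inl h.choose else Sum.inr i
    | Sum.inr j => if h : ∃ i, (i, j) ∈ M then Sum.inr h.choose else Sum.inl j
  invFun y := match y with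
    | Sum.inl j => if h : ∃ i, (i, j) ∈ M then Sum.inl h.choose else Sum.inr j
    | Sum.inr i => if h : ∃ j, (i, j) ∈ M then Sum.inr h.choose else Sum.inl i
  left_inv x := by
    rcases x with i | j
    · by_cases h : ∃ j, (i, j) ∈ M
      · simp only [dif_pos h]
        have hmem := h.choose_spec
        have h' : ∃ i', (i', h.choose) ∈ M := ⟨i, hmem⟩
        simp only [dif_pos h']
        have := hM.2 _ h'.choose_spec _ hmem rfl
        simp only [Prod.ext_iff] at this
        simp [this.1]
      · simp only [dif_neg h, dif_neg h]
    · by_cases h : ∃ i, (i, j) ∈ M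
      · simp only [dif_pos h]
        have hmem := h.choose_spec
        have h' : ∃ j', (h.choose, j') ∈ M := ⟨j, hmem⟩
        simp only [dif_pos h']
        have := hM.1 _ h'.choose_spec _ hmem rfl
        simp only [Prod.ext_iff] at this
        simp [this.2]
      · simp only [dif_neg h, dif_neg h]
  right_inv y := by
    rcases y with j | i
    · by_cases h : ∃ i, (i, j) ∈ M
      · simp only [dif_pos h]
        have hmem := h.choose_spec
        have h' : ∃ j', (h.choose, j') ∈ M := ⟨j, hmem⟩
        simp only [dif_pos h']
        have := hM.1 _ h'.choose_spec _ hmem rfl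
        simp only [Prod.ext_iff] at this
        simp [this.2]
      · simp only [dif_neg h, dif_neg h]
    · by_cases h : ∃ j, (i, j) ∈ M
      · simp only [dif_pos h]
        have hmem := h.choose_spec
        have h' : ∃ i', (i', h.choose) ∈ M := ⟨i, hmem⟩
        simp only [dif_pos h']
        have := hM.2 _ h'.choose_spec _ hmem rfl
        simp only [Prod.ext_iff] at this
        simp [this.1]
      · simp only [dif_neg h, dif_neg h]

lemma matchEquiv_perfect {n₁ n₂ : ℕ} (M : Finset (Fin n₁ × Fin n₂))
    (hM : IsPartialMatching M) : IsPerfectMatching (matchEquiv M hM) := by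
  constructor
  · intro i j h
    simp only [matchEquiv, Equiv.coe_fn_mk] at h
    by_cases hc : ∃ j, (i, j) ∈ M
    · rw [dif_pos hc] at h; exact absurd h (by simp)
    · rw [dif_neg hc] at h; injection h with h'; exact h'.symm
  · intro j i h
    simp only [matchEquiv, Equiv.coe_fn_mk] at h
    by_cases hc : ∃ i, (i, j) ∈ M
    · rw [dif_pos hc] at h; exact absurd h (by simp)
    · rw [dif_neg hc] at h; injection h with h'; exact h'.symm

lemma matchOf_matchEquiv {n₁ n₂ : ℕ} (M : Finset (Fin n₁ × Fin n₂))
    (hM : IsPartialMatching M) : matchOf (matchEquiv M hM) = M := by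
  ext ⟨i, j⟩
  rw [mem_matchOf]
  simp only [matchEquiv, Equiv.coe_fn_mk]
  constructor
  · intro h
    by_cases hc : ∃ j', (i, j') ∈ M
    · rw [dif_pos hc] at h
      have := Sum.inl.inj h
      rw [← this]
      exact hc.choose_spec
    · rw [dif_neg hc] at h; exact absurd h (by simp)
  · intro h
    have hc : ∃ j', (i, j') ∈ M := ⟨j, h⟩
    rw [dif_pos hc]
    have := hM.1 _ hc.choose_spec _ h rfl
    simp only [Prod.ext_iff] at this
    rw [this.2]

/-- The minimum cost of a perfect matching on `Bi(A,B)` equals `W₁(A,B)`, the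
infimum over partial matchings `M ⊆ Ã × B̃` of the matching cost. -/
theorem minMatching_eq_W1 {n₁ n₂ : ℕ} (a : Fin n₁ → E2) (b : Fin n₂ → E2)
    (ha : ∀ i, (a i) 0 < (a i) 1) (hb : ∀ j, (b j) 0 < (b j) 1) :
    sInf {c | ∃ μ : (Fin n₁ ⊕ Fin n₂) ≃ (Fin n₂ ⊕ Fin n₁),
        IsPerfectMatching μ ∧ c = ∑ x, edgeW a b x (μ x)} = W1 a b := by
  rw [W1]
  congr 1
  ext c
  constructor
  · rintro ⟨μ, hμ, rfl⟩
    exact ⟨matchOf μ, matchOf_isPartial μ, (perfect_cost a b μ hμ)⟩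
  · rintro ⟨M, hM, rfl⟩
    refine ⟨matchEquiv M hM, matchEquiv_perfect M hM, ?_⟩
    rw [perfect_cost a b _ (matchEquiv_perfect M hM), matchOf_matchEquiv M hM]
end
end

section
/- If an s-WSPD covers all pairs of a finite set P ⊂ ℝ² (every unordered pair of distinct points lies in exactly one well-separated pair), then for any two distinct points p, q ∈ P with representatives p₀ ∈ U, q₀ ∈ V of the pair containing (p,q) and s > 4, one can construct, by induction on distances, a path from p to q in the representative graph WS_s(P) of length at most ((s+4)/(s−4))·‖p−q‖₂, using that ‖p−p₀‖₂ ≤ (2/s)‖p−q‖₂, ‖q−q₀‖₂ ≤ (2/s)‖p−q‖₂, and ‖p₀−q₀‖₂ ≤ (1 + 4/s)‖p−q‖₂. -/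
noncomputable section

/-
For each pair `(U, V)` of the decomposition, `U` and `V` have diameter at most
`2d` and lie at distance at least `s·d`, so a representative pair `(p₀, q₀)` approximates
every pair `(p, q)` it covers: `p` and `p₀` are `(2/s)‖p - q‖`-close, and similarly on the
other side. Given `p, q ∈ P`, walk from `p` to `p₀`, take the edge `p₀q₀` and walk from `q₀`
to `q`; by induction on the distance the two walks cost at most `t·(2/s)‖p - q‖` each, and
`t = (s+4)/(s-4)` is exactly the solution of `2·t·(2/s) + (1 + 4/s) = t`.
-/

section Walks

variable {Adj : E2 → E2 → Prop}

theorem pathCost_append_of_getLast? (w : E2 → E2 → ℝ) {l : List E2} {b : E2}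
    (hl : l.getLast? = some b) (t : List E2) :
    pathCost w (l ++ t) = pathCost w l + pathCost w (b :: t) := by
  induction l with
  | nil => simp at hl
  | cons x r ih =>
    cases r with
    | nil =>
      obtain rfl : x = b := by simpa using hl
      cases t <;> simp [pathCost]
    | cons y r =>
      simp only [List.cons_append, pathCost]
      rw [List.getLast?_cons_cons] at hl
      rw [← List.cons_append, ih hl]
      ring

def WalkWithin (Adj : E2 → E2 → Prop) (p q : E2) (c : ℝ) : Prop :=
  ∃ l : List E2, IsWalk Adj p q l ∧ pathCost dist l ≤ c

theorem WalkWithin.refl (p : E2) : WalkWithin Adj p p 0 :=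
  ⟨[p], ⟨rfl, rfl, List.isChain_singleton p⟩, le_rfl⟩

theorem WalkWithin.of_adj {p q : E2} (h : Adj p q) : WalkWithin Adj p q (dist p q) :=
  ⟨[p, q], ⟨rfl, rfl, List.isChain_pair.2 h⟩, by simp [pathCost]⟩

theorem WalkWithin.mono {p q : E2} {c c' : ℝ} (h : WalkWithin Adj p q c) (hc : c ≤ c') :
    WalkWithin Adj p q c' :=
  let ⟨l, hl, hcost⟩ := h
  ⟨l, hl, hcost.trans hc⟩

theorem WalkWithin.trans {a b c : E2} {c₁ c₂ : ℝ} (h₁ : WalkWithin Adj a b c₁)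
    (h₂ : WalkWithin Adj b c c₂) : WalkWithin Adj a c (c₁ + c₂) := by
  obtain ⟨l₁, ⟨hhead₁, hlast₁, hchain₁⟩, hcost₁⟩ := h₁
  obtain ⟨l₂, ⟨hhead₂, hlast₂, hchain₂⟩, hcost₂⟩ := h₂
  obtain ⟨t, rfl⟩ := List.head?_eq_some_iff.1 hhead₂
  have hstep := List.isChain_cons.1 hchain₂
  refine ⟨l₁ ++ t, ⟨?_, ?_, ?_⟩, ?_⟩
  · obtain ⟨r, rfl⟩ := List.head?_eq_some_iff.1 hhead₁
    rfl
  · cases t with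
    | nil => simpa [hlast₁] using hlast₂
    | cons y r => simpa [List.getLast?_append_cons] using hlast₂
  · refine hchain₁.append hstep.2 fun x hx y hy => ?_
    obtain rfl : b = x := by simpa [hlast₁] using hx
    exact hstep.1 y hy
  · rw [pathCost_append_of_getLast? dist hlast₁]
    linarith

end Walks

theorem Finset.induction_on_lt_image {α β : Type*} [LinearOrder β] (S : Finset α) (f : α → β)
    {motive : α → Prop} (step : ∀ a ∈ S, (∀ b ∈ S, f b < f a → motive b) → motive a) :
    ∀ a ∈ S, motive a := by
  classical
  by_contra! hbad
  obtain ⟨a, ha, hmin⟩ := (S.filter (¬ motive ·)).exists_min_image f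
    (let ⟨a, ha, hna⟩ := hbad; ⟨a, Finset.mem_filter.2 ⟨ha, hna⟩⟩)
  rw [Finset.mem_filter] at ha
  refine ha.2 (step a ha.1 fun b hb hlt => ?_)
  by_contra hnb
  exact (hmin b (Finset.mem_filter.2 ⟨hb, hnb⟩)).not_gt hlt

namespace WellSeparated

variable {s : ℝ} {U V : Set E2}

theorem symm_s19 (h : WellSeparated s U V) : WellSeparated s V U := by
  obtain ⟨x, y, d, hd, hU, hV, hxy⟩ := h
  exact ⟨y, x, d, hd, hV, hU, dist_comm x y ▸ hxy⟩

theorem dist_le_two_div_mul (hs : 0 < s) (h : WellSeparated s U V) {a a' b : E2}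
    (ha : a ∈ U) (ha' : a' ∈ U) (hb : b ∈ V) : dist a a' ≤ 2 / s * dist a b := by
  obtain ⟨x, y, d, hd, hU, hV, hxy⟩ := h
  have hsep : s * d ≤ dist a b := by
    linarith [dist_triangle4 x a b y, dist_comm x a, hU a ha, hV b hb]
  have hdiam : dist a a' ≤ 2 * d := by
    linarith [dist_triangle a x a', dist_comm a' x, hU a ha, hU a' ha']
  calc dist a a' ≤ 2 * d := hdiam
    _ = 2 / s * (s * d) := by field_simp
    _ ≤ 2 / s * dist a b := by gcongr

theorem dist_le_of_mem (hs : 0 < s) (h : WellSeparated s U V) {a a' b b' : E2}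
    (ha : a ∈ U) (ha' : a' ∈ U) (hb : b ∈ V) (hb' : b' ∈ V) :
    dist a a' ≤ 2 / s * dist a b ∧ dist b b' ≤ 2 / s * dist a b ∧
      dist a' b' ≤ (1 + 4 / s) * dist a b := by
  have hU := h.dist_le_two_div_mul hs ha ha' hb
  have hV := dist_comm b a ▸ h.symm_s19.dist_le_two_div_mul hs hb hb' ha
  refine ⟨hU, hV, ?_⟩
  calc dist a' b' ≤ dist a' a + dist a b + dist b b' := dist_triangle4 a' a b b'
    _ ≤ 2 / s * dist a b + dist a b + 2 / s * dist a b := by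
      rw [dist_comm a' a]; gcongr
    _ = (1 + 4 / s) * dist a b := by ring

end WellSeparated

/-- The representative graph `WS_s(P)`. -/
def wsGraph {ι : Type*} (uRep vRep : ι → E2) (x y : E2) : Prop :=
  ∃ j, (x = uRep j ∧ y = vRep j) ∨ (x = vRep j ∧ y = uRep j)

section Spanner

variable {ι : Type*} {P : Finset E2} {s : ℝ} {U V : ι → Set E2} {uRep vRep : ι → E2}

theorem exists_wsGraph_edge_near (hs : 0 < s)
    (hUP : ∀ i, U i ⊆ (P : Set E2)) (hVP : ∀ i, V i ⊆ (P : Set E2))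
    (hWS : ∀ i, WellSeparated s (U i) (V i))
    (huRep : ∀ i, uRep i ∈ U i) (hvRep : ∀ i, vRep i ∈ V i)
    (hcover : ∀ p ∈ P, ∀ q ∈ P, p ≠ q → ∃ i, (p ∈ U i ∧ q ∈ V i) ∨ (p ∈ V i ∧ q ∈ U i))
    {p q : E2} (hp : p ∈ P) (hq : q ∈ P) (hpq : p ≠ q) :
    ∃ u ∈ P, ∃ v ∈ P, wsGraph uRep vRep u v ∧ dist p u ≤ 2 / s * dist p q ∧
      dist v q ≤ 2 / s * dist p q ∧ dist u v ≤ (1 + 4 / s) * dist p q := by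
  obtain ⟨i, ⟨hpU, hqV⟩ | ⟨hpV, hqU⟩⟩ := hcover p hp q hq hpq
  · obtain ⟨hpu, hqv, huv⟩ := (hWS i).dist_le_of_mem hs hpU (huRep i) hqV (hvRep i)
    exact ⟨uRep i, hUP i (huRep i), vRep i, hVP i (hvRep i), ⟨i, .inl ⟨rfl, rfl⟩⟩,
      hpu, dist_comm q (vRep i) ▸ hqv, huv⟩
  · obtain ⟨hpu, hqv, huv⟩ := (hWS i).symm_s19.dist_le_of_mem hs hpV (hvRep i) hqU (huRep i)
    exact ⟨vRep i, hVP i (hvRep i), uRep i, hUP i (huRep i), ⟨i, .inr ⟨rfl, rfl⟩⟩,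
      hpu, dist_comm q (uRep i) ▸ hqv, huv⟩

theorem spanner_ratio_eq (hs : 4 < s) :
    (s + 4) / (s - 4) * (2 / s) + (1 + 4 / s) + (s + 4) / (s - 4) * (2 / s) =
      (s + 4) / (s - 4) := by
  have : s - 4 ≠ 0 := by linarith
  have : s ≠ 0 := by linarith
  field_simp
  ring

theorem walkWithin_wsGraph (hs : 4 < s)
    (hUP : ∀ i, U i ⊆ (P : Set E2)) (hVP : ∀ i, V i ⊆ (P : Set E2))
    (hWS : ∀ i, WellSeparated s (U i) (V i))
    (huRep : ∀ i, uRep i ∈ U i) (hvRep : ∀ i, vRep i ∈ V i)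
    (hcover : ∀ p ∈ P, ∀ q ∈ P, p ≠ q → ∃ i, (p ∈ U i ∧ q ∈ V i) ∨ (p ∈ V i ∧ q ∈ U i))
    {p q : E2} (hp : p ∈ P) (hq : q ∈ P) :
    WalkWithin (wsGraph uRep vRep) p q ((s + 4) / (s - 4) * dist p q) := by
  have hratio := spanner_ratio_eq hs
  set t := (s + 4) / (s - 4)
  have hs0 : 0 < s := by linarith
  have ht : 0 ≤ t := div_nonneg (by linarith) (by linarith)
  have hshrink : 2 / s < 1 := (div_lt_one hs0).2 (by linarith)
  refine Finset.induction_on_lt_image (P ×ˢ P) (fun x => dist x.1 x.2)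
    (motive := fun x => WalkWithin (wsGraph uRep vRep) x.1 x.2 (t * dist x.1 x.2))
    ?_ (p, q) (Finset.mem_product.2 ⟨hp, hq⟩)
  rintro ⟨p, q⟩ hpq ih
  obtain ⟨hp, hq⟩ : p ∈ P ∧ q ∈ P := Finset.mem_product.1 hpq
  obtain rfl | hne := eq_or_ne p q
  · simpa using WalkWithin.refl p
  obtain ⟨u, hu, v, hv, huv, hpu, hvq, hdist⟩ :=
    exists_wsGraph_edge_near hs0 hUP hVP hWS huRep hvRep hcover hp hq hne
  have hclose : 2 / s * dist p q < dist p q := by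
    simpa using mul_lt_mul_of_pos_right hshrink (dist_pos.2 hne)
  have hwalk_pu := ih (p, u) (Finset.mem_product.2 ⟨hp, hu⟩) (hpu.trans_lt hclose)
  have hwalk_vq := ih (v, q) (Finset.mem_product.2 ⟨hv, hq⟩) (hvq.trans_lt hclose)
  refine ((hwalk_pu.trans (WalkWithin.of_adj huv)).trans hwalk_vq).mono ?_
  calc t * dist p u + dist u v + t * dist v q
      ≤ t * (2 / s * dist p q) + (1 + 4 / s) * dist p q + t * (2 / s * dist p q) := by
        gcongr
    _ = t * dist p q := by linear_combination dist p q * hratio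

end Spanner

theorem wspd_spanner_path_general {ι : Type*} (P : Finset E2) (s : ℝ) (hs : 4 < s)
    (U V : ι → Set E2) (uRep vRep : ι → E2)
    (hUP : ∀ i, U i ⊆ (P : Set E2)) (hVP : ∀ i, V i ⊆ (P : Set E2))
    (hWS : ∀ i, WellSeparated s (U i) (V i))
    (huRep : ∀ i, uRep i ∈ U i) (hvRep : ∀ i, vRep i ∈ V i)
    (hcover : ∀ p ∈ P, ∀ q ∈ P, p ≠ q →
      ∃! i, (p ∈ U i ∧ q ∈ V i) ∨ (p ∈ V i ∧ q ∈ U i))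
    (p q : E2) (hp : p ∈ P) (hq : q ∈ P)
    (i : ι) (hpU : p ∈ U i) (hqV : q ∈ V i) :
    dist p (uRep i) ≤ 2 / s * dist p q ∧
    dist q (vRep i) ≤ 2 / s * dist p q ∧
    dist (uRep i) (vRep i) ≤ (1 + 4 / s) * dist p q ∧
    ∃ l : List E2,
      IsWalk (fun x y => ∃ j, (x = uRep j ∧ y = vRep j) ∨ (x = vRep j ∧ y = uRep j))
        p q l ∧
      pathCost dist l ≤ (s + 4) / (s - 4) * dist p q := by
  have hs0 : 0 < s := by linarith
  obtain ⟨hpu, hqv, huv⟩ := (hWS i).dist_le_of_mem hs0 hpU (huRep i) hqV (hvRep i)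
  exact ⟨hpu, hqv, huv, walkWithin_wsGraph hs hUP hVP hWS huRep hvRep
    (fun p hp q hq hpq => (hcover p hp q hq hpq).exists) hp hq⟩

/-- If an `s`-WSPD covers all pairs of a finite `P ⊆ ℝ²`, `s > 4`, and `p ≠ q` lie in
the well-separated pair `(U i, V i)` with representatives `uRep i`, `vRep i`, then
`‖p - uRep i‖ ≤ (2/s)‖p-q‖`, `‖q - vRep i‖ ≤ (2/s)‖p-q‖`,
`‖uRep i - vRep i‖ ≤ (1+4/s)‖p-q‖`, and there is a path from `p` to `q` in the
representative graph `WS_s(P)` of length at most `((s+4)/(s-4))·‖p-q‖₂`. -/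
theorem wspd_spanner_path {ι : Type*} (P : Finset E2) (s : ℝ) (hs : 4 < s)
    (U V : ι → Set E2) (uRep vRep : ι → E2)
    (hUP : ∀ i, U i ⊆ (P : Set E2)) (hVP : ∀ i, V i ⊆ (P : Set E2))
    (hWS : ∀ i, WellSeparated s (U i) (V i))
    (huRep : ∀ i, uRep i ∈ U i) (hvRep : ∀ i, vRep i ∈ V i)
    (hcover : ∀ p ∈ P, ∀ q ∈ P, p ≠ q →
      ∃! i, (p ∈ U i ∧ q ∈ V i) ∨ (p ∈ V i ∧ q ∈ U i))
    (p q : E2) (hp : p ∈ P) (hq : q ∈ P) (hpq : p ≠ q)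
    (i : ι) (hpU : p ∈ U i) (hqV : q ∈ V i) :
    dist p (uRep i) ≤ 2 / s * dist p q ∧
    dist q (vRep i) ≤ 2 / s * dist p q ∧
    dist (uRep i) (vRep i) ≤ (1 + 4 / s) * dist p q ∧
    ∃ l : List E2,
      IsWalk (fun x y => ∃ j, (x = uRep j ∧ y = vRep j) ∨ (x = vRep j ∧ y = uRep j))
        p q l ∧
      pathCost dist l ≤ (s + 4) / (s - 4) * dist p q :=
  wspd_spanner_path_general P s hs U V uRep vRep hUP hVP hWS huRep hvRep hcover p q hp hq i hpU hqV
end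
end
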